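/- Let A ∈ 𝔰𝔭(ℝ⁶) with A ≠ 0. The following are equivalent: (1) there exists c ∈ ℝ such that Q_A − c·I₇ is a derivation of 𝔤_A (i.e. the associated coclosed G₂-structure is an algebraic soliton of the Laplacian coflow); (2) [ [A,Aᵗ] + S_A ∘₆ S_A , A ] = ( ( |[A,Aᵗ]|² + ⟨S_A ∘₆ S_A, [A,Aᵗ]⟩ ) / |A|² )·A. Moreover, in this case the constant is c = −½( tr(S_A²) + ½(tr JA)² + |[A,Aᵗ]|²/|A|² + ⟨S_A ∘₆ S_A, [A,Aᵗ]⟩/|A|² ). -/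

import Mathlib

open Matrix BigOperators

noncomputable section

abbrev M6 : Type := Matrix (Fin 6) (Fin 6) ℝ
abbrev M7 : Type := Matrix (Fin 7) (Fin 7) ℝ

/-- The canonical almost complex structure `J` on `ℝ⁶`:
`Je₁ = e₂, Je₂ = −e₁, Je₃ = e₄, Je₄ = −e₃, Je₅ = e₆, Je₆ = −e₅` (0-based indices). -/
def J6 : M6 := Matrix.of fun i j =>
  if (i = 1 ∧ j = 0) ∨ (i = 3 ∧ j = 2) ∨ (i = 5 ∧ j = 4) then 1
  else if (i = 0 ∧ j = 1) ∨ (i = 2 ∧ j = 3) ∨ (i = 4 ∧ j = 5) then -1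
  else 0

/-- `A ∈ 𝔰𝔭(ℝ⁶)` iff `AJ + JAᵗ = 0`. -/
def inSp (A : M6) : Prop := A * J6 + J6 * Aᵀ = 0

/-- The symmetric part `S_A = ½(A + Aᵗ)`. -/
def symPart (A : M6) : M6 := (1/2 : ℝ) • (A + Aᵀ)

/-- Frobenius inner product `⟨X,Y⟩ = tr(XYᵗ)`. -/
def mdot {n : ℕ} (X Y : Matrix (Fin n) (Fin n) ℝ) : ℝ := (X * Yᵀ).trace

/-- Commutator `[X,Y] = XY − YX`. -/
def mcomm {n : ℕ} (X Y : Matrix (Fin n) (Fin n) ℝ) : Matrix (Fin n) (Fin n) ℝ := X * Y - Y * X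

/-- Kronecker delta. -/
def kdelta {n : ℕ} (x y : Fin n) : ℝ := if x = y then 1 else 0

/-- The totally antisymmetric 3-tensor `e^a ∧ e^b ∧ e^c` evaluated on `(e_i, e_j, e_k)`. -/
def alt3 {n : ℕ} (a b c i j k : Fin n) : ℝ :=
  Matrix.det !![kdelta a i, kdelta a j, kdelta a k;
                kdelta b i, kdelta b j, kdelta b k;
                kdelta c i, kdelta c j, kdelta c k]

/-- `ρ⁺ = e¹³⁵ − e¹⁴⁶ − e²⁴⁵ − e²³⁶` (here written with 0-based indices). -/
def rhoP (i j k : Fin 6) : ℝ :=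
  alt3 0 2 4 i j k - alt3 0 3 5 i j k - alt3 1 3 4 i j k - alt3 1 2 5 i j k

/-- `(h ∘₆ k)_{ab} = Σ_{m,n,p,q} h_{mn} k_{pq} ρ⁺_{mpa} ρ⁺_{nqb}`. -/
def circ6 (h k : M6) : M6 :=
  Matrix.of fun a b => ∑ m, ∑ n, ∑ p, ∑ q, h m n * k p q * rhoP m p a * rhoP n q b

/-- Embed a 6×6 block and a scalar as a block-diagonal 7×7 matrix `diag(M, x)`. -/
def blockDiag7 (M : M6) (x : ℝ) : M7 :=
  Matrix.of fun i j =>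
    if hi : (i : ℕ) < 6 then
      (if hj : (j : ℕ) < 6 then M ⟨i, hi⟩ ⟨j, hj⟩ else 0)
    else (if (j : ℕ) < 6 then 0 else x)

/-- The Lie bracket of the almost Abelian Lie algebra `𝔤_A = ℝ⁶ ⊕ ℝe₇`:
`[e₇, v] = Av` for `v ∈ ℝ⁶` and `[v, w] = 0` for `v, w ∈ ℝ⁶`. -/
def bracket7 (A : M6) (x y : Fin 7 → ℝ) : Fin 7 → ℝ :=
  x 6 • (blockDiag7 A 0).mulVec y - y 6 • (blockDiag7 A 0).mulVec x

/-- `D ∈ gl(ℝ⁷)` is a derivation of `𝔤_A`. -/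
def IsDerivation7 (A : M6) (D : M7) : Prop :=
  ∀ x y : Fin 7 → ℝ,
    D.mulVec (bracket7 A x y) = bracket7 A (D.mulVec x) y + bracket7 A x (D.mulVec y)

/-- `Q_A = diag(½[A,Aᵗ] + ½ S_A ∘₆ S_A , −½tr(S_A²) − ¼(tr JA)²)`, the matrix with
`Δ_A ψ = θ(Q_A)ψ`. -/
def QA (A : M6) : M7 :=
  blockDiag7 ((1/2 : ℝ) • mcomm A Aᵀ + (1/2 : ℝ) • circ6 (symPart A) (symPart A))
    (-(1/2) * (symPart A * symPart A).trace - (1/4) * ((J6 * A).trace)^2)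

/-! The matrix `Q_A` is block diagonal, `diag(½ C, q_A)` with `C = [A,Aᵗ] + S_A ∘₆ S_A`, and a
block-diagonal matrix `diag(M, d)` is a derivation of `𝔤_A` exactly when `[M, A] = d A`: the defect
`D[x,y] - [Dx,y] - [x,Dy]` equals `x₇ K y - y₇ K x` with `K = diag([M,A] - d A, 0)`.
Hence `Q_A - c I` is a derivation iff `[C, A] = 2(q_A - c) A`. Pairing with `A` and using
`⟨[C,A], A⟩ = ⟨C, [A,Aᵗ]⟩` forces the factor to be `⟨C, [A,Aᵗ]⟩ / |A|²`, and `c` is read off. -/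

section

variable {n : ℕ} (A B C : Matrix (Fin n) (Fin n) ℝ)

lemma mcomm_smul_left (c : ℝ) : mcomm (c • C) A = c • mcomm C A := by
  simp [mcomm, smul_sub]

lemma mcomm_sub_smul_one_left (c : ℝ) : mcomm (C - c • 1) A = mcomm C A := by
  simp [mcomm, sub_mul, mul_sub]

lemma mdot_add_left : mdot (A + B) C = mdot A C + mdot B C := by
  simp [mdot, add_mul]

lemma mdot_smul_left (c : ℝ) : mdot (c • A) B = c * mdot A B := by
  simp [mdot]

lemma mdot_self_eq_zero_iff : mdot A A = 0 ↔ A = 0 := by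
  simpa [mdot] using trace_mul_conjTranspose_self_eq_zero_iff (A := A)

lemma mdot_mcomm_left : mdot (mcomm C A) A = mdot C (mcomm A Aᵀ) := by
  simp only [mdot, mcomm, transpose_sub, transpose_mul, transpose_transpose, sub_mul, mul_sub,
    trace_sub, Matrix.mul_assoc]
  rw [trace_mul_comm A, Matrix.mul_assoc]

end

lemma exists_mcomm_eq_smul_iff {n : ℕ} {A C : Matrix (Fin n) (Fin n) ℝ} (hA : A ≠ 0) :
    (∃ μ : ℝ, mcomm C A = μ • A) ↔ mcomm C A = (mdot C (mcomm A Aᵀ) / mdot A A) • A := by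
  refine ⟨fun ⟨μ, hμ⟩ => ?_, fun h => ⟨_, h⟩⟩
  have hμ' : μ * mdot A A = mdot C (mcomm A Aᵀ) := by
    rw [← mdot_smul_left, ← hμ, mdot_mcomm_left]
  rwa [← hμ', mul_div_cancel_right₀ _ ((mdot_self_eq_zero_iff A).not.2 hA)]

lemma eq_zero_of_forall_smul_mulVec_comm {ι R : Type*} [Fintype ι] [DecidableEq ι] [CommRing R]
    {K : Matrix ι ι R} (k : ι) (hk : K *ᵥ Pi.single k 1 = 0)
    (h : ∀ x y, x k • K *ᵥ y = y k • K *ᵥ x) : K = 0 := by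
  refine ext_iff_mulVec.2 fun y => ?_
  simpa [hk] using h (Pi.single k 1) y

lemma blockDiag7_eq_reindex (M : M6) (d : ℝ) :
    blockDiag7 M d =
      reindex finSumFinEquiv finSumFinEquiv (fromBlocks M 0 0 (scalar (Fin 1) d)) := by
  rw [← Equiv.symm_apply_eq]
  ext (i | i) (j | j) <;> simp [blockDiag7, finSumFinEquiv, Fin.fin_one_eq_zero]

lemma blockDiag7_mul (M N : M6) (a b : ℝ) :
    blockDiag7 M a * blockDiag7 N b = blockDiag7 (M * N) (a * b) := by
  simp [blockDiag7_eq_reindex, fromBlocks_multiply]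

lemma blockDiag7_sub (M N : M6) (a b : ℝ) :
    blockDiag7 M a - blockDiag7 N b = blockDiag7 (M - N) (a - b) := by
  ext i j
  by_cases hi : (i : ℕ) < 6 <;> by_cases hj : (j : ℕ) < 6 <;> simp [blockDiag7, hi, hj]

lemma smul_blockDiag7 (c : ℝ) (M : M6) (a : ℝ) :
    c • blockDiag7 M a = blockDiag7 (c • M) (c * a) := by
  ext i j
  by_cases hi : (i : ℕ) < 6 <;> by_cases hj : (j : ℕ) < 6 <;> simp [blockDiag7, hi, hj]

lemma blockDiag7_one : blockDiag7 1 1 = 1 := by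
  simp [blockDiag7_eq_reindex, fromBlocks_one]

lemma blockDiag7_eq_zero_iff (M : M6) : blockDiag7 M 0 = 0 ↔ M = 0 := by
  rw [blockDiag7_eq_reindex, ← Equiv.eq_symm_apply]
  simp [← fromBlocks_zero, fromBlocks_inj]

lemma blockDiag7_sub_smul_one (M : M6) (q c : ℝ) :
    blockDiag7 M q - c • (1 : M7) = blockDiag7 (M - c • 1) (q - c) := by
  rw [← blockDiag7_one, smul_blockDiag7, blockDiag7_sub, mul_one]

lemma blockDiag7_mulVec_last (M : M6) (d : ℝ) (x : Fin 7 → ℝ) :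
    (blockDiag7 M d *ᵥ x) 6 = d * x 6 := by
  simp [blockDiag7, mulVec, dotProduct, Fin.sum_univ_castSucc]

lemma blockDiag7_mulVec_single_last (M : M6) : blockDiag7 M 0 *ᵥ Pi.single 6 1 = 0 := by
  ext i
  simp [blockDiag7]

lemma isDerivation7_blockDiag7_iff (A M : M6) (d : ℝ) :
    IsDerivation7 A (blockDiag7 M d) ↔ mcomm M A = d • A := by
  set D := blockDiag7 M d
  set Â := blockDiag7 A 0
  set K := blockDiag7 (mcomm M A - d • A) 0
  have hK : K = D * Â - Â * D - d • Â := by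
    simp [K, D, Â, blockDiag7_mul, blockDiag7_sub, smul_blockDiag7, mcomm]
  have hD : ∀ x, (D *ᵥ x) 6 = d * x 6 := blockDiag7_mulVec_last M d
  have defect : ∀ x y, D *ᵥ bracket7 A x y - (bracket7 A (D *ᵥ x) y + bracket7 A x (D *ᵥ y)) =
      x 6 • K *ᵥ y - y 6 • K *ᵥ x := by
    intro x y
    simp only [bracket7, hD, hK, sub_mulVec, smul_mulVec, ← mulVec_mulVec,
      mulVec_sub, mulVec_smul]
    module
  calc IsDerivation7 A D ↔ ∀ x y, x 6 • K *ᵥ y = y 6 • K *ᵥ x := by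
        refine forall₂_congr fun x y => ?_
        rw [← sub_eq_zero, defect, sub_eq_zero]
    _ ↔ K = 0 := ⟨eq_zero_of_forall_smul_mulVec_comm 6 (blockDiag7_mulVec_single_last _),
        fun h => by simp [h]⟩
    _ ↔ mcomm M A - d • A = 0 := blockDiag7_eq_zero_iff _
    _ ↔ mcomm M A = d • A := sub_eq_zero

lemma isDerivation7_blockDiag7_sub_smul_one_iff (A M : M6) (q c : ℝ) :
    IsDerivation7 A (blockDiag7 M q - c • 1) ↔ mcomm M A = (q - c) • A := by
  rw [blockDiag7_sub_smul_one, isDerivation7_blockDiag7_iff, mcomm_sub_smul_one_left]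

def qA (A : M6) : ℝ :=
  -(1/2) * (symPart A * symPart A).trace - (1/4) * ((J6 * A).trace)^2

lemma QA_eq (A : M6) :
    QA A = blockDiag7 ((1/2 : ℝ) • (mcomm A Aᵀ + circ6 (symPart A) (symPart A))) (qA A) := by
  rw [smul_add]; rfl

lemma isDerivation7_QA_sub_smul_one_iff (A : M6) (c : ℝ) :
    IsDerivation7 A (QA A - c • 1) ↔
      mcomm (mcomm A Aᵀ + circ6 (symPart A) (symPart A)) A = (2 * (qA A - c)) • A := by
  rw [QA_eq, isDerivation7_blockDiag7_sub_smul_one_iff, mcomm_smul_left, one_div,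
    inv_smul_eq_iff₀ two_ne_zero, mul_smul]

theorem algebraic_soliton_iff_general (A : M6) (hA0 : A ≠ 0) :
    ((∃ c : ℝ, IsDerivation7 A (QA A - c • (1 : M7))) ↔
      mcomm (mcomm A Aᵀ + circ6 (symPart A) (symPart A)) A =
        ((mdot (mcomm A Aᵀ) (mcomm A Aᵀ)
            + mdot (circ6 (symPart A) (symPart A)) (mcomm A Aᵀ)) / mdot A A) • A) ∧
    (mcomm (mcomm A Aᵀ + circ6 (symPart A) (symPart A)) A =
        ((mdot (mcomm A Aᵀ) (mcomm A Aᵀ)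
            + mdot (circ6 (symPart A) (symPart A)) (mcomm A Aᵀ)) / mdot A A) • A →
      IsDerivation7 A (QA A -
        (-(1/2) * ((symPart A * symPart A).trace + (1/2) * ((J6 * A).trace)^2
          + mdot (mcomm A Aᵀ) (mcomm A Aᵀ) / mdot A A
          + mdot (circ6 (symPart A) (symPart A)) (mcomm A Aᵀ) / mdot A A)) • (1 : M7))) := by
  have key := isDerivation7_QA_sub_smul_one_iff A
  refine ⟨?_, fun h => (key _).2 ?_⟩
  · rw [← mdot_add_left, ← exists_mcomm_eq_smul_iff hA0]
    refine ⟨fun ⟨c, hc⟩ => ⟨_, (key c).1 hc⟩, fun ⟨μ, hμ⟩ => ⟨qA A - μ / 2, (key _).2 ?_⟩⟩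
    rwa [show 2 * (qA A - (qA A - μ / 2)) = μ by ring]
  · rw [h, qA]
    congr 1
    ring

/-- `(𝔤_A, φ)` is an algebraic soliton of the Laplacian coflow (i.e. `Q_A − c·I₇` is a
derivation of `𝔤_A` for some `c`) iff
`[[A,Aᵗ] + S_A ∘₆ S_A, A] = ((|[A,Aᵗ]|² + ⟨S_A ∘₆ S_A, [A,Aᵗ]⟩)/|A|²)·A`;
in this case the constant is
`c = −½(tr(S_A²) + ½(tr JA)² + |[A,Aᵗ]|²/|A|² + ⟨S_A ∘₆ S_A,[A,Aᵗ]⟩/|A|²)`. -/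
theorem algebraic_soliton_iff (A : M6) (hA : inSp A) (hA0 : A ≠ 0) :
    ((∃ c : ℝ, IsDerivation7 A (QA A - c • (1 : M7))) ↔
      mcomm (mcomm A Aᵀ + circ6 (symPart A) (symPart A)) A =
        ((mdot (mcomm A Aᵀ) (mcomm A Aᵀ)
            + mdot (circ6 (symPart A) (symPart A)) (mcomm A Aᵀ)) / mdot A A) • A) ∧
    (mcomm (mcomm A Aᵀ + circ6 (symPart A) (symPart A)) A =
        ((mdot (mcomm A Aᵀ) (mcomm A Aᵀ)
            + mdot (circ6 (symPart A) (symPart A)) (mcomm A Aᵀ)) / mdot A A) • A →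
      IsDerivation7 A (QA A -
        (-(1/2) * ((symPart A * symPart A).trace + (1/2) * ((J6 * A).trace)^2
          + mdot (mcomm A Aᵀ) (mcomm A Aᵀ) / mdot A A
          + mdot (circ6 (symPart A) (symPart A)) (mcomm A Aᵀ) / mdot A A)) • (1 : M7))) :=
  algebraic_soliton_iff_general A hA0
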